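/- arXiv:1910.14276 — 2 statements merged into one kernel-verified Lean document; each statement's English description precedes it below -/
import Mathlib

section
/- Minimax identity for budgeted energy maximization: let $B$ be the incidence matrix of a connected graph, $R = \mathrm{diag}(r)$ with $r > 0$, $C$ a positive diagonal matrix, $d$ a demand orthogonal to the all-ones vector, and $W \ge 0$. Then $\max_{r' \ge 0, \|Cr'\|_1 \le W} \min_{B^Tf = d} f^T(R + \mathrm{diag}(r'))f = \min_{B^Tf = d} \left( f^TRf + W\|C^{-1/2}f\|_\infty^2 \right)$. -/
/-!
The right-hand side `Φ f = energy r f + W * max_e f_e² / C_e` is continuous and coercive, so it has a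
minimiser `f` among the flows with divergence `d`. Any admissible `r'` raises the energy of `f` by
at most `W * max_e f_e² / C_e`, so every value on the left is at most `Φ f`.

Conversely, `Φ` is the maximum of finitely many quadratic energies (the whole budget spent on a
single edge). At the minimiser some convex combination of the active ones is stationary: otherwise
Hahn–Banach separation yields a circulation along which every active energy decreases to first
order. That combination is `r + r'` for an admissible `r'`, and stationarity says that `(r + r') f`
is a potential difference, so by the Dirichlet principle `f` minimises the `(r + r')`-energy,
whose value is `Φ f`.
-/

open scoped Matrix

open Filter Topology

theorem exists_continuousLinearMap_neg_of_disjoint {E : Type*} [TopologicalSpace E]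
    [AddCommGroup E] [Module ℝ E] [IsTopologicalAddGroup E] [ContinuousSMul ℝ E]
    [LocallyConvexSpace ℝ E] {K : Set E} {S : Submodule ℝ E} (hK : Convex ℝ K)
    (hKc : IsCompact K) (hS : IsClosed (S : Set E)) (hKS : Disjoint K S) :
    ∃ φ : StrongDual ℝ E, (∀ s ∈ S, φ s = 0) ∧ ∀ k ∈ K, φ k < 0 := by
  obtain ⟨φ, u, v, hφK, huv, hφS⟩ :=
    geometric_hahn_banach_compact_closed hK hKc S.convex hS hKS
  -- `φ` is bounded below on the subspace `S`, hence vanishes there.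
  have hφ0 : ∀ s ∈ S, φ s = 0 := fun s hs => by
    by_contra hne
    have := hφS (((v - 1) / φ s) • s) (S.smul_mem _ hs)
    rw [map_smul, smul_eq_mul, div_mul_cancel₀ _ hne] at this
    linarith
  have hv : v < 0 := by simpa using hφS 0 S.zero_mem
  exact ⟨φ, hφ0, fun k hk => by linarith [hφK k hk]⟩

section Matrix

variable {E V : Type*} [Fintype E] [Fintype V]

theorem forall_dotProduct_mulVec_eq_zero_iff (B : Matrix E V ℝ) (y : E → ℝ) :
    (∀ p, y ⬝ᵥ B *ᵥ p = 0) ↔ Bᵀ *ᵥ y = 0 := by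
  simp_rw [Matrix.dotProduct_mulVec, ← Matrix.mulVec_transpose]
  refine ⟨fun h => dotProduct_self_eq_zero.1 (h _), fun h p => by simp [h]⟩

theorem exists_dotProduct_neg_of_disjoint_range {K : Set (E → ℝ)} (hK : Convex ℝ K)
    (hKc : IsCompact K) (B : Matrix E V ℝ) (hKB : ∀ p, B *ᵥ p ∉ K) :
    ∃ y, Bᵀ *ᵥ y = 0 ∧ ∀ k ∈ K, y ⬝ᵥ k < 0 := by
  classical
  obtain ⟨φ, hφB, hφK⟩ := exists_continuousLinearMap_neg_of_disjoint hK hKc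
    (Submodule.closed_of_finiteDimensional (LinearMap.range B.mulVecLin))
    (Set.disjoint_left.2 fun k hk ⟨p, hp⟩ => hKB p (by rwa [← hp] at hk))
  set y : E → ℝ := fun e => φ fun j => if e = j then 1 else 0
  have hφ (x : E → ℝ) : φ x = y ⬝ᵥ x := by
    simpa [dotProduct, mul_comm] using (φ : (E → ℝ) →ₗ[ℝ] ℝ).pi_apply_eq_sum_univ x
  refine ⟨y, (forall_dotProduct_mulVec_eq_zero_iff B y).1 fun p => ?_, fun k hk => ?_⟩
  · rw [← hφ]; exact hφB _ ⟨p, rfl⟩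
  · rw [← hφ]; exact hφK k hk

theorem exists_transpose_mulVec_eq (B : Matrix E V ℝ) {d : V → ℝ}
    (hd : ∀ x, B *ᵥ x = 0 → x ⬝ᵥ d = 0) : ∃ f, Bᵀ *ᵥ f = d := by
  by_contra! h
  obtain ⟨x, hx, hxd⟩ := exists_dotProduct_neg_of_disjoint_range (convex_singleton d)
    isCompact_singleton Bᵀ h
  rw [Matrix.transpose_transpose] at hx
  simpa [hd x hx] using hxd d rfl

end Matrix

section Energy

variable {E V : Type*} [Fintype E] [Fintype V]

def energy (w f : E → ℝ) : ℝ := ∑ e, w e * f e ^ 2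

theorem energy_nonneg {w : E → ℝ} (hw : 0 ≤ w) (f : E → ℝ) : 0 ≤ energy w f :=
  Finset.sum_nonneg fun e _ => mul_nonneg (hw e) (sq_nonneg _)

theorem energy_add (w w' f : E → ℝ) : energy (w + w') f = energy w f + energy w' f := by
  simp only [energy, Pi.add_apply, add_mul, Finset.sum_add_distrib]

theorem energy_single [DecidableEq E] (e : E) (a : ℝ) (f : E → ℝ) :
    energy (Pi.single e a) f = a * f e ^ 2 := by
  simp [energy, Pi.single_apply]

theorem energy_sum_smul {ι : Type*} [Fintype ι] (μ : ι → ℝ) (w : ι → E → ℝ) (f : E → ℝ) :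
    energy (∑ i, μ i • w i) f = ∑ i, μ i * energy (w i) f := by
  simp only [energy, Finset.sum_apply, Pi.smul_apply, smul_eq_mul, Finset.sum_mul,
    Finset.mul_sum, mul_assoc]
  exact Finset.sum_comm

theorem energy_add_smul (w f g : E → ℝ) (t : ℝ) :
    energy w (f + t • g) = energy w f + t * (2 * (g ⬝ᵥ (w * f)) + t * energy w g) := by
  simp only [energy, dotProduct, Pi.add_apply, Pi.smul_apply, Pi.mul_apply, smul_eq_mul,
    Finset.mul_sum, ← Finset.sum_add_distrib]
  exact Finset.sum_congr rfl fun e _ => by ring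

-- Dirichlet principle
theorem isLeast_energy_of_mul_eq_mulVec (B : Matrix E V ℝ) {q f : E → ℝ} (hq : 0 ≤ q)
    {p : V → ℝ} (hp : q * f = B *ᵥ p) :
    IsLeast {y | ∃ g, Bᵀ *ᵥ g = Bᵀ *ᵥ f ∧ y = energy q g} (energy q f) := by
  refine ⟨⟨f, rfl, rfl⟩, ?_⟩
  rintro _ ⟨g, hg, rfl⟩
  have horth : (g - f) ⬝ᵥ (q * f) = 0 := by
    rw [hp]
    exact (forall_dotProduct_mulVec_eq_zero_iff B _).2 (by rw [Matrix.mulVec_sub, hg, sub_self]) p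
  calc energy q f ≤ energy q f + 1 * (2 * 0 + 1 * energy q (g - f)) := by
        linarith [energy_nonneg hq (g - f)]
    _ = energy q g := by rw [← horth, ← energy_add_smul, one_smul, add_sub_cancel]

end Energy

theorem eventually_add_mul_lt {a b c M : ℝ} (hcM : c ≤ M) (ha : c = M → a < 0) :
    ∀ᶠ t in 𝓝[>] (0 : ℝ), c + t * (a + t * b) < M := by
  rcases hcM.lt_or_eq with hlt | rfl
  · have : Tendsto (fun t => c + t * (a + t * b)) (𝓝 0) (𝓝 c) :=
      (by fun_prop : Continuous fun t : ℝ => c + t * (a + t * b)).tendsto' 0 c (by simp)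
    exact (this.eventually (gt_mem_nhds hlt)).filter_mono nhdsWithin_le_nhds
  · have : Tendsto (fun t => a + t * b) (𝓝[>] 0) (𝓝 a) :=
      ((by fun_prop : Continuous fun t : ℝ => a + t * b).tendsto' 0 a (by simp)).mono_left
        nhdsWithin_le_nhds
    filter_upwards [this.eventually (gt_mem_nhds (ha rfl)), self_mem_nhdsWithin] with t h ht
    linarith [mul_neg_of_pos_of_neg (Set.mem_Ioi.1 ht) h]

section Mixture

variable {ι E V : Type*} [Fintype ι] [Fintype E] [Fintype V]

theorem exists_stationary_mixture [Nonempty ι] (B : Matrix E V ℝ) (w : ι → E → ℝ) {f : E → ℝ}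
    (hf : ∀ g, Bᵀ *ᵥ g = 0 → ⨆ i, energy (w i) f ≤ ⨆ i, energy (w i) (f + g)) :
    ∃ μ ∈ stdSimplex ℝ ι, ∑ i, μ i * energy (w i) f = ⨆ i, energy (w i) f ∧
      ∃ p, (∑ i, μ i • w i) * f = B *ᵥ p := by
  classical
  set M := ⨆ i, energy (w i) f
  have hle : ∀ i, energy (w i) f ≤ M := le_ciSup (Finite.bddAbove_range _)
  let value := Fintype.linearCombination ℝ fun i => energy (w i) f
  let mix := Fintype.linearCombination ℝ fun i => w i * f
  set Δ := stdSimplex ℝ ι ∩ value ⁻¹' {M}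
  have hΔ : Convex ℝ Δ :=
    (convex_stdSimplex ℝ ι).inter ((convex_singleton M).linear_preimage value)
  have hΔc : IsCompact Δ := (isCompact_stdSimplex ℝ ι).inter_right
    (isClosed_singleton.preimage value.continuous_of_finiteDimensional)
  by_contra! hno
  have hdisj : ∀ p, B *ᵥ p ∉ mix '' Δ := by
    rintro p ⟨μ, ⟨hμ, hμM⟩, hμp⟩
    exact hno μ hμ (by simpa [value, Fintype.linearCombination_apply] using hμM) p
      (by simpa [mix, Fintype.linearCombination_apply, Finset.sum_mul, smul_mul_assoc] using hμp)
  obtain ⟨y, hy, hneg⟩ := exists_dotProduct_neg_of_disjoint_range (hΔ.linear_image mix)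
    (hΔc.image mix.continuous_of_finiteDimensional) B hdisj
  -- `y` is a circulation along which every active energy strictly decreases to first order.
  have hdesc : ∀ᶠ t in 𝓝[>] (0 : ℝ), ∀ i, energy (w i) (f + t • y) < M := by
    refine eventually_all.2 fun i => ?_
    simp_rw [energy_add_smul]
    refine eventually_add_mul_lt (hle i) fun hi => ?_
    have := hneg _ ⟨Pi.single i 1, ⟨single_mem_stdSimplex ℝ i, by simpa [value] using hi⟩, rfl⟩
    simp only [mix, Fintype.linearCombination_apply_single, one_smul] at this
    linarith
  obtain ⟨t, ht⟩ := hdesc.exists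
  obtain ⟨i, hi⟩ := exists_eq_ciSup_of_finite (f := fun i => energy (w i) (f + t • y))
  have := hf (t • y) (by rw [Matrix.mulVec_smul, hy, smul_zero])
  linarith [ht i]

end Mixture

theorem continuous_ciSup_of_fintype {ι X L : Type*} [Fintype ι] [Nonempty ι] [TopologicalSpace X]
    [ConditionallyCompleteLattice L] [TopologicalSpace L] [ContinuousSup L] {F : ι → X → L}
    (hF : ∀ i, Continuous (F i)) : Continuous fun x => ⨆ i, F i x := by
  simp_rw [← Finset.sup'_univ_eq_ciSup]
  exact Continuous.finset_sup'_apply Finset.univ_nonempty fun i _ => hF i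

section Budget

variable {E V : Type*} [Fintype E] [Fintype V]

noncomputable def budgetEnergy (r C : E → ℝ) (W : ℝ) (f : E → ℝ) : ℝ :=
  energy r f + W * ⨆ e, f e ^ 2 / C e

/-- The whole budget spent on the single edge `e`; the index `none` (nothing spent) keeps the
index type nonempty and accounts for `⨆ e, _ = 0` when there are no edges. -/
noncomputable def budgetWeight [DecidableEq E] (r C : E → ℝ) (W : ℝ) : Option E → E → ℝ
  | none => r
  | some e => r + Pi.single e (W / C e)

theorem budgetEnergy_eq_iSup [DecidableEq E] {C : E → ℝ} (hC : 0 ≤ C) {W : ℝ} (hW : 0 ≤ W)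
    (r f : E → ℝ) : budgetEnergy r C W f = ⨆ i, energy (budgetWeight r C W i) f := by
  have hsome (e : E) :
      energy (budgetWeight r C W (some e)) f = energy r f + W * (f e ^ 2 / C e) := by
    rw [budgetWeight, energy_add, energy_single]
    ring
  have hbdd := Finite.bddAbove_range fun i => energy (budgetWeight r C W i) f
  refine le_antisymm ?_ (ciSup_le ?_)
  · rcases isEmpty_or_nonempty E with hE | hE
    · rw [budgetEnergy, Real.iSup_of_isEmpty, mul_zero, add_zero]
      exact le_ciSup hbdd none
    · obtain ⟨e, he⟩ := exists_eq_ciSup_of_finite (f := fun e => f e ^ 2 / C e)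
      rw [budgetEnergy, ← he, ← hsome]
      exact le_ciSup hbdd (some e)
  · rintro (_ | e)
    · simpa [budgetEnergy, budgetWeight] using
        mul_nonneg hW (Real.iSup_nonneg fun e => div_nonneg (sq_nonneg (f e)) (hC e))
    · rw [hsome, budgetEnergy]
      gcongr
      exact le_ciSup (Finite.bddAbove_range fun e => f e ^ 2 / C e) e

theorem continuous_energy (w : E → ℝ) : Continuous (energy w) := by
  unfold energy
  fun_prop

theorem continuous_budgetEnergy {C : E → ℝ} (hC : 0 ≤ C) {W : ℝ} (hW : 0 ≤ W) (r : E → ℝ) :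
    Continuous (budgetEnergy r C W) := by
  classical
  rw [funext (budgetEnergy_eq_iSup hC hW r)]
  exact continuous_ciSup_of_fintype fun i => continuous_energy _

theorem energy_add_le_budgetEnergy {r r' C : E → ℝ} {W : ℝ} (hC : ∀ e, 0 < C e) (hr' : 0 ≤ r')
    (hbudget : ∑ e, C e * r' e ≤ W) (f : E → ℝ) :
    energy (r + r') f ≤ budgetEnergy r C W f := by
  set M := ⨆ e, f e ^ 2 / C e
  have hM (e : E) : f e ^ 2 / C e ≤ M :=
    le_ciSup (Finite.bddAbove_range fun e => f e ^ 2 / C e) e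
  have hM0 : 0 ≤ M := Real.iSup_nonneg fun e => div_nonneg (sq_nonneg (f e)) (hC e).le
  rw [energy_add, budgetEnergy]
  gcongr
  calc energy r' f = ∑ e, C e * r' e * (f e ^ 2 / C e) :=
        Finset.sum_congr rfl fun e _ => by field_simp [(hC e).ne']
    _ ≤ ∑ e, C e * r' e * M := by
        gcongr with e
        · exact mul_nonneg (hC e).le (hr' e)
        · exact hM e
    _ = (∑ e, C e * r' e) * M := Finset.sum_mul _ _ _ |>.symm
    _ ≤ W * M := by gcongr

theorem exists_isMinOn_of_energy_le {Φ : (E → ℝ) → ℝ} (hΦ : Continuous Φ) {r : E → ℝ}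
    (hr : ∀ e, 0 < r e) (hrΦ : ∀ f, energy r f ≤ Φ f) {s : Set (E → ℝ)} (hs : IsClosed s)
    {f₀ : E → ℝ} (hf₀ : f₀ ∈ s) : ∃ f ∈ s, IsMinOn Φ s f := by
  -- Below the level `Φ f₀`, each `|f e|` is at most `√(Φ f₀ / r e)`.
  have hbox : IsCompact (Set.univ.pi fun e => Set.Icc (-√(Φ f₀ / r e)) √(Φ f₀ / r e)) :=
    isCompact_univ_pi fun e => isCompact_Icc
  refine hΦ.continuousOn.exists_isMinOn' hs hf₀ ?_
  filter_upwards [mem_inf_of_left hbox.compl_mem_cocompact] with f hf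
  simp only [Set.mem_compl_iff, Set.mem_univ_pi, not_forall] at hf
  obtain ⟨e, he⟩ := hf
  by_contra! hlt
  have hle : r e * f e ^ 2 ≤ Φ f₀ :=
    (Finset.single_le_sum (fun j _ => mul_nonneg (hr j).le (sq_nonneg (f j)))
      (Finset.mem_univ e)).trans ((hrΦ f).trans hlt.le)
  exact he (abs_le.1 (Real.abs_le_sqrt (by rw [le_div_iff₀ (hr e)]; linarith)))

theorem exists_resistance_of_isMinOn_budgetEnergy (B : Matrix E V ℝ) {d : V → ℝ}
    {r C : E → ℝ} {W : ℝ} (hC : ∀ e, 0 < C e) (hW : 0 ≤ W) {f : E → ℝ} (hf : Bᵀ *ᵥ f = d)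
    (hmin : IsMinOn (budgetEnergy r C W) {g | Bᵀ *ᵥ g = d} f) :
    ∃ r', 0 ≤ r' ∧ ∑ e, C e * r' e ≤ W ∧ energy (r + r') f = budgetEnergy r C W f ∧
      ∃ p, (r + r') * f = B *ᵥ p := by
  classical
  have hΦ := budgetEnergy_eq_iSup (fun e => (hC e).le) hW r
  obtain ⟨μ, ⟨hμ0, hμ1⟩, hμM, p, hp⟩ := exists_stationary_mixture B (budgetWeight r C W)
    (f := f) fun g hg => by
      rw [← hΦ, ← hΦ]
      exact hmin (by simp [Matrix.mulVec_add, hf, hg])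
  rw [Fintype.sum_option] at hμ1
  have hmix : ∑ i, μ i • budgetWeight r C W i = r + fun e => W * μ (some e) / C e := by
    ext j
    simp only [budgetWeight, Finset.sum_apply, Pi.smul_apply, smul_eq_mul, Fintype.sum_option,
      Pi.add_apply, Pi.single_apply, mul_add, mul_ite, mul_zero, Finset.sum_add_distrib,
      ← Finset.sum_mul, Finset.sum_ite_eq, Finset.mem_univ, if_true]
    linear_combination r j * hμ1
  refine ⟨fun e => W * μ (some e) / C e, fun e => ?_, ?_, ?_, p, hmix ▸ hp⟩
  · have := hμ0 (some e)
    have := hC e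
    positivity
  · calc ∑ e, C e * (W * μ (some e) / C e) = W * ∑ e, μ (some e) := by
          rw [Finset.mul_sum]
          exact Finset.sum_congr rfl fun e _ => by field_simp [(hC e).ne']
      _ ≤ W := by nlinarith [hμ0 none]
  · rw [← hmix, energy_sum_smul, hμM, hΦ]

end Budget

theorem budget_energy_minimax_general {V E : Type*} [Fintype V] [Fintype E]
    (B : Matrix E V ℝ)
    (hconn : ∀ x : V → ℝ, B.mulVec x = 0 → ∃ c : ℝ, ∀ v, x v = c)
    (d : V → ℝ) (hd : ∑ v, d v = 0)
    (r : E → ℝ) (hr : ∀ e, 0 < r e)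
    (C : E → ℝ) (hC : ∀ e, 0 < C e)
    (W : ℝ) (hW : 0 ≤ W) :
    ∃ t : ℝ,
      IsGreatest {x : ℝ | ∃ r' : E → ℝ, (∀ e, 0 ≤ r' e) ∧ (∑ e, C e * r' e) ≤ W ∧
        x = sInf {y : ℝ | ∃ f : E → ℝ, B.transpose.mulVec f = d ∧
          y = ∑ e, (r e + r' e) * f e ^ 2}} t ∧
      IsLeast {y : ℝ | ∃ f : E → ℝ, B.transpose.mulVec f = d ∧
        y = (∑ e, r e * f e ^ 2) + W * ⨆ e, f e ^ 2 / C e} t := by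
  obtain ⟨f₀, hf₀⟩ := exists_transpose_mulVec_eq B (d := d) fun x hx => by
    obtain ⟨c, hc⟩ := hconn x hx
    simp only [dotProduct, hc, ← Finset.mul_sum, hd, mul_zero]
  obtain ⟨f, hf, hmin⟩ := exists_isMinOn_of_energy_le (s := {g | Bᵀ *ᵥ g = d})
    (continuous_budgetEnergy (fun e => (hC e).le) hW r) hr
    (fun g => by simpa using energy_add_le_budgetEnergy (r' := 0) hC le_rfl (by simpa using hW) g)
    (isClosed_eq (Continuous.matrix_mulVec continuous_const continuous_id) continuous_const) hf₀
  obtain ⟨r', hr', hr'W, hr'f, p, hp⟩ :=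
    exists_resistance_of_isMinOn_budgetEnergy B hC hW hf hmin
  refine ⟨budgetEnergy r C W f, ⟨⟨r', hr', hr'W, ?_⟩, ?_⟩, ⟨f, hf, rfl⟩, ?_⟩
  · rw [← hr'f, ← hf]
    exact (isLeast_energy_of_mul_eq_mulVec B (add_nonneg (fun e => (hr e).le) hr') hp).csInf_eq.symm
  · rintro _ ⟨r'', hr'', hr''W, rfl⟩
    refine csInf_le_of_le ⟨0, ?_⟩ ⟨f, hf, rfl⟩ (energy_add_le_budgetEnergy hC hr'' hr''W f)
    rintro _ ⟨g, -, rfl⟩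
    exact energy_nonneg (add_nonneg (fun e => (hr e).le) hr'') g
  · rintro _ ⟨g, hg, rfl⟩
    exact hmin hg

/-- Minimax identity for budgeted energy maximization:
`max_{r' ≥ 0, ‖Cr'‖₁ ≤ W} min_{Bᵀf = d} fᵀ(R + diag r')f
  = min_{Bᵀf = d} (fᵀRf + W ‖C^{-1/2} f‖_∞²)`,
stated as: there is a common value `t` attained as a greatest value of the
left-hand side and a least value of the right-hand side. -/
theorem budget_energy_minimax {V E : Type*} [Fintype V] [Fintype E] [DecidableEq V]
    (B : Matrix E V ℝ)
    (hrows : ∀ e : E, ∃ u v : V, u ≠ v ∧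
      ∀ w, B e w = (if w = v then (1 : ℝ) else 0) - (if w = u then 1 else 0))
    (hconn : ∀ x : V → ℝ, B.mulVec x = 0 → ∃ c : ℝ, ∀ v, x v = c)
    (d : V → ℝ) (hd : ∑ v, d v = 0)
    (r : E → ℝ) (hr : ∀ e, 0 < r e)
    (C : E → ℝ) (hC : ∀ e, 0 < C e)
    (W : ℝ) (hW : 0 ≤ W) :
    ∃ t : ℝ,
      IsGreatest {x : ℝ | ∃ r' : E → ℝ, (∀ e, 0 ≤ r' e) ∧ (∑ e, C e * r' e) ≤ W ∧
        x = sInf {y : ℝ | ∃ f : E → ℝ, B.transpose.mulVec f = d ∧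
          y = ∑ e, (r e + r' e) * f e ^ 2}} t ∧
      IsLeast {y : ℝ | ∃ f : E → ℝ, B.transpose.mulVec f = d ∧
        y = (∑ e, r e * f e ^ 2) + W * ⨆ e, f e ^ 2 / C e} t :=
  budget_energy_minimax_general B hconn d hd r hr C hC W hW
end

section
/- Optimality conditions identify a smoothed $\ell_2$-$\ell_{2p}$ minimizer as an electric flow: let $B$ be the incidence matrix of a connected graph, $R = \mathrm{diag}(r)$ with $r > 0$, $W > 0$, $p > 1$, and let $f^*$ minimize $f^TRf + W\|f\|_{2p}^2$ over flows with $B^Tf = d$, with $f^* \neq 0$. Define $r'_e = W \frac{(f^*_e)^{2(p-1)}}{\|(f^*)^2\|_p^{p-1}}$. Then $\|r'\|_q \le W$ where $1/p+1/q=1$, and $f^*$ is the electric $d$-flow for resistances $r + r'$, i.e., there exists $\phi$ with $B\phi = (R + \mathrm{diag}(r'))f^*$. -/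
/-!
Along any direction `h` with `Bᵀh = 0` the line `t ↦ f* + t h` stays feasible, so the derivative
of the objective at `t = 0`, which is `2 ⟪(r + r') f*, h⟫`, vanishes. Thus `(r + r') f*` is
orthogonal to `ker Bᵀ`, whose orthogonal complement is the range of `B`. The norm bound is an
equality: since `(p - 1) q = p`, we get `r'_e ^ q = W ^ q (f*_e²)^p / ∑ (f*²)^p`.
-/

open scoped Matrix

theorem Matrix.exists_mulVec_eq_of_forall_dotProduct_eq_zero {V E : Type*} [Fintype V] [Fintype E]
    (B : Matrix E V ℝ) (v : E → ℝ)
    (hv : ∀ h, Bᵀ *ᵥ h = 0 → v ⬝ᵥ h = 0) : ∃ φ, B *ᵥ φ = v := by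
  classical
  have hker : WithLp.toLp 2 v ∈ (Bᵀ.toEuclideanLin).kerᗮ := by
    rw [Submodule.mem_orthogonal]
    intro h hh
    have := hv h.ofLp (by simpa [Matrix.toLpLin_apply] using congrArg WithLp.ofLp hh)
    simpa [EuclideanSpace.inner_eq_star_dotProduct, dotProduct_comm] using this
  rw [LinearMap.orthogonal_ker, ← Matrix.toEuclideanLin_conjTranspose_eq_adjoint] at hker
  obtain ⟨φ, hφ⟩ := hker
  exact ⟨φ.ofLp, by simpa [Matrix.toLpLin_apply] using congrArg WithLp.ofLp hφ⟩

lemma hasDerivAt_sq_line (x y : ℝ) :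
    HasDerivAt (fun t : ℝ => (x + t * y) ^ 2) (2 * x * y) 0 := by
  have hline : HasDerivAt (fun t : ℝ => x + t * y) y 0 := by
    simpa using ((hasDerivAt_id (0 : ℝ)).mul_const y).const_add x
  exact (hline.pow 2).congr_deriv (by simp)

lemma hasDerivAt_sq_rpow_line {p : ℝ} (hp : 1 ≤ p) (x y : ℝ) :
    HasDerivAt (fun t : ℝ => ((x + t * y) ^ 2) ^ p) (2 * p * (x ^ 2) ^ (p - 1) * x * y) 0 := by
  convert (hasDerivAt_sq_line x y).rpow_const (Or.inr hp) using 1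
  simp only [zero_mul, add_zero]
  ring

section
variable {E : Type*} [Fintype E]

-- `fᵀ diag(r) f + W ‖f‖_{2p}²`, with `‖f‖_{2p}² = (∑ (f_e²)^p)^(1/p)`.
noncomputable def smoothedEnergy (r : E → ℝ) (W p : ℝ) (f : E → ℝ) : ℝ :=
  ∑ e, r e * f e ^ 2 + W * (∑ e, (f e ^ 2) ^ p) ^ (1 / p)

noncomputable def lpResistance (W p : ℝ) (f : E → ℝ) (e : E) : ℝ :=
  W * (f e ^ 2) ^ (p - 1) / ((∑ e', (f e' ^ 2) ^ p) ^ (1 / p)) ^ (p - 1)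

lemma sum_sq_rpow_pos {f : E → ℝ} (hf : f ≠ 0) (p : ℝ) : 0 < ∑ e, (f e ^ 2) ^ p := by
  obtain ⟨e, he⟩ := Function.ne_iff.mp hf
  exact Finset.sum_pos' (fun e _ => by positivity)
    ⟨e, Finset.mem_univ e, Real.rpow_pos_of_pos (sq_pos_of_ne_zero he) p⟩

lemma lpResistance_eq {W p : ℝ} (hp : p ≠ 0) {f : E → ℝ} (hf : f ≠ 0) (e : E) :
    lpResistance W p f e = W * (f e ^ 2) ^ (p - 1) * (∑ e', (f e' ^ 2) ^ p) ^ (1 / p - 1) := by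
  have hT := sum_sq_rpow_pos hf p
  have hexp : 1 / p - 1 = -(1 / p * (p - 1)) := by field_simp; ring
  rw [lpResistance, ← Real.rpow_mul hT.le, hexp, Real.rpow_neg hT.le, div_eq_mul_inv]

lemma sum_lpResistance_rpow {W p q : ℝ} (hW : 0 ≤ W) (hpq : p.HolderConjugate q) {f : E → ℝ}
    (hf : f ≠ 0) : ∑ e, lpResistance W p f e ^ q = W ^ q := by
  have hT := sum_sq_rpow_pos hf p
  have hterm (e : E) :
      lpResistance W p f e ^ q = W ^ q * ((f e ^ 2) ^ p / ∑ e', (f e' ^ 2) ^ p) := by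
    rw [lpResistance, Real.div_rpow (by positivity) (by positivity),
      Real.mul_rpow hW (by positivity), ← Real.rpow_mul (sq_nonneg _),
      ← Real.rpow_mul (by positivity), hpq.sub_one_mul_conj, ← Real.rpow_mul hT.le,
      one_div_mul_cancel hpq.ne_zero, Real.rpow_one, mul_div_assoc]
  rw [Finset.sum_congr rfl fun e _ => hterm e, ← Finset.mul_sum, ← Finset.sum_div,
    div_self hT.ne', mul_one]

lemma lpResistance_norm_eq {W p q : ℝ} (hW : 0 ≤ W) (hpq : p.HolderConjugate q)
    {f : E → ℝ} (hf : f ≠ 0) : (∑ e, lpResistance W p f e ^ q) ^ (1 / q) = W := by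
  rw [sum_lpResistance_rpow hW hpq hf, ← Real.rpow_mul hW, mul_one_div_cancel hpq.symm.ne_zero,
    Real.rpow_one]

lemma hasDerivAt_smoothedEnergy_line {p : ℝ} (hp : 1 ≤ p) (r : E → ℝ) (W : ℝ)
    {f : E → ℝ} (hf : f ≠ 0) (h : E → ℝ) :
    HasDerivAt (fun t : ℝ => smoothedEnergy r W p (f + t • h))
      (2 * ((fun e => (r e + lpResistance W p f e) * f e) ⬝ᵥ h)) 0 := by
  have hT := sum_sq_rpow_pos hf p
  have hquad : HasDerivAt (fun t => ∑ e, r e * (f e + t * h e) ^ 2)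
      (∑ e, r e * (2 * f e * h e)) 0 :=
    HasDerivAt.fun_sum fun e _ => (hasDerivAt_sq_line (f e) (h e)).const_mul (r e)
  have hsum : HasDerivAt (fun t => ∑ e, ((f e + t * h e) ^ 2) ^ p)
      (∑ e, 2 * p * (f e ^ 2) ^ (p - 1) * f e * h e) 0 :=
    HasDerivAt.fun_sum fun e _ => hasDerivAt_sq_rpow_line hp (f e) (h e)
  have hroot : HasDerivAt (fun s => W * s ^ (1 / p))
      (W * (1 / p * (∑ e, (f e ^ 2) ^ p) ^ (1 / p - 1)))
      (∑ e, ((f e + 0 * h e) ^ 2) ^ p) := by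
    simpa using (Real.hasDerivAt_rpow_const (p := 1 / p) (Or.inl hT.ne')).const_mul W
  have hline : (fun t : ℝ => smoothedEnergy r W p (f + t • h)) = fun t =>
      ∑ e, r e * (f e + t * h e) ^ 2 + W * (∑ e, ((f e + t * h e) ^ 2) ^ p) ^ (1 / p) := by
    ext t; simp [smoothedEnergy]
  rw [hline]
  refine (hquad.add (hroot.comp 0 hsum)).congr_deriv ?_
  simp only [dotProduct, Finset.mul_sum, ← Finset.sum_add_distrib]
  refine Finset.sum_congr rfl fun e _ => ?_
  rw [lpResistance_eq (zero_lt_one.trans_le hp).ne' hf]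
  field_simp

end

theorem smoothed_l2lp_minimizer_is_electric_general {V E : Type*} [Fintype V] [Fintype E]
    (B : Matrix E V ℝ)
    (d : V → ℝ)
    (r : E → ℝ)
    (W : ℝ) (hW : 0 < W)
    (p q : ℝ) (hp : 1 < p) (hpq : 1 / p + 1 / q = 1)
    (fstar : E → ℝ) (hfd : B.transpose.mulVec fstar = d) (hfne : fstar ≠ 0)
    (hfmin : ∀ f : E → ℝ, B.transpose.mulVec f = d →
      (∑ e, r e * fstar e ^ 2) + W * (∑ e, (fstar e ^ 2) ^ p) ^ (1 / p) ≤
        (∑ e, r e * f e ^ 2) + W * (∑ e, (f e ^ 2) ^ p) ^ (1 / p))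
    (r' : E → ℝ)
    (hr' : r' = fun e =>
      W * (fstar e ^ 2) ^ (p - 1) / ((∑ e', (fstar e' ^ 2) ^ p) ^ (1 / p)) ^ (p - 1)) :
    (∑ e, r' e ^ q) ^ (1 / q) ≤ W ∧
    ∃ φ : V → ℝ, B.mulVec φ = fun e => (r e + r' e) * fstar e := by
  obtain rfl : r' = lpResistance W p fstar := hr'
  have hpq' : p.HolderConjugate q :=
    Real.holderConjugate_iff.mpr ⟨hp, by simpa only [one_div] using hpq⟩
  refine ⟨(lpResistance_norm_eq hW.le hpq' hfne).le,
    B.exists_mulVec_eq_of_forall_dotProduct_eq_zero _ fun h hh => ?_⟩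
  have hmin : IsLocalMin (fun t : ℝ => smoothedEnergy r W p (fstar + t • h)) 0 := by
    refine .of_forall fun t => ?_
    simp only [zero_smul, add_zero]
    exact hfmin (fstar + t • h)
      (by rw [Matrix.mulVec_add, Matrix.mulVec_smul, hfd, hh, smul_zero, add_zero])
  simpa using hmin.hasDerivAt_eq_zero (hasDerivAt_smoothedEnergy_line hp.le r W hfne h)

/-- Optimality conditions identify a smoothed `ℓ₂`-`ℓ_{2p}` minimizer as an
electric flow: if `f*` minimizes `fᵀRf + W‖f‖_{2p}²` over flows with `Bᵀf = d`
and `f* ≠ 0`, then `r'_e = W (f*_e)^{2(p-1)} / ‖(f*)²‖_p^{p-1}` satisfies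
`‖r'‖_q ≤ W` and `f*` is the electric `d`-flow for resistances `r + r'`,
i.e., `(R + diag r') f* = Bφ` for some potentials `φ`. -/
theorem smoothed_l2lp_minimizer_is_electric {V E : Type*} [Fintype V] [Fintype E]
    [DecidableEq V]
    (B : Matrix E V ℝ)
    (hrows : ∀ e : E, ∃ u v : V, u ≠ v ∧
      ∀ w, B e w = (if w = v then (1 : ℝ) else 0) - (if w = u then 1 else 0))
    (hconn : ∀ x : V → ℝ, B.mulVec x = 0 → ∃ c : ℝ, ∀ v, x v = c)
    (d : V → ℝ) (hd : ∑ v, d v = 0)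
    (r : E → ℝ) (hr : ∀ e, 0 < r e)
    (W : ℝ) (hW : 0 < W)
    (p q : ℝ) (hp : 1 < p) (hpq : 1 / p + 1 / q = 1)
    (fstar : E → ℝ) (hfd : B.transpose.mulVec fstar = d) (hfne : fstar ≠ 0)
    (hfmin : ∀ f : E → ℝ, B.transpose.mulVec f = d →
      (∑ e, r e * fstar e ^ 2) + W * (∑ e, (fstar e ^ 2) ^ p) ^ (1 / p) ≤
        (∑ e, r e * f e ^ 2) + W * (∑ e, (f e ^ 2) ^ p) ^ (1 / p))
    (r' : E → ℝ)
    (hr' : r' = fun e =>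
      W * (fstar e ^ 2) ^ (p - 1) / ((∑ e', (fstar e' ^ 2) ^ p) ^ (1 / p)) ^ (p - 1)) :
    (∑ e, r' e ^ q) ^ (1 / q) ≤ W ∧
    ∃ φ : V → ℝ, B.mulVec φ = fun e => (r e + r' e) * fstar e :=
  smoothed_l2lp_minimizer_is_electric_general B d r W hW p q hp hpq fstar hfd hfne hfmin r' hr'
end
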